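/- Let F, G, H : HCohI^n → HCohI be normal functors, let (f_{X⃗}) be a uniform family of cliques with f_{X⃗} ⊑ F(X⃗) ⊸ G(X⃗) for every n-tuple X⃗ of hypercoherences, and let (g_{X⃗}) be a uniform family of cliques with g_{X⃗} ⊑ G(X⃗) ⊸ H(X⃗). Then the family of relational compositions (g_{X⃗} ∘ f_{X⃗}), where g ∘ f = {(x,z) | ∃y, (x,y) ∈ f and (y,z) ∈ g}, is a uniform family of cliques with g_{X⃗} ∘ f_{X⃗} ⊑ F(X⃗) ⊸ H(X⃗). -/

import Mathlib

open CategoryTheory Limits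

/-- A hypercoherence: a web together with a set `Γ` of finite nonempty subsets
containing all singletons. -/
structure HCoh : Type 1 where
  web : Type
  Gam : Set web → Prop
  finite : ∀ {S}, Gam S → S.Finite
  nonempty : ∀ {S}, Gam S → S.Nonempty
  sing : ∀ x, Gam {x}

/-- A clique of a hypercoherence: a subset all of whose finite nonempty subsets are
coherent. -/
def HCoh.IsClique (X : HCoh) (c : Set X.web) : Prop :=
  ∀ S : Set X.web, S ⊆ c → S.Finite → S.Nonempty → X.Gam S

/-- The dual hypercoherence. -/
def HCoh.dual (X : HCoh) : HCoh where
  web := X.web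
  Gam S := (∃ x, S = {x}) ∨ (S.Finite ∧ S.Nonempty ∧ ¬ X.Gam S)
  finite := by
    rintro S (⟨x, rfl⟩ | h)
    exacts [Set.finite_singleton x, h.1]
  nonempty := by
    rintro S (⟨x, rfl⟩ | h)
    exacts [Set.singleton_nonempty x, h.2.1]
  sing x := Or.inl ⟨x, rfl⟩

/-- The tensor product of hypercoherences. -/
def HCoh.tens (X Y : HCoh) : HCoh where
  web := X.web × Y.web
  Gam S := S.Finite ∧ S.Nonempty ∧ X.Gam (Prod.fst '' S) ∧ Y.Gam (Prod.snd '' S)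
  finite h := h.1
  nonempty h := h.2.1
  sing p := ⟨Set.finite_singleton p, Set.singleton_nonempty p,
    by rw [Set.image_singleton]; exact X.sing p.1,
    by rw [Set.image_singleton]; exact Y.sing p.2⟩

/-- Linear implication of hypercoherences: `X ⊸ Y := (X ⊗ Y^⊥)^⊥`. -/
def HCoh.lolly (X Y : HCoh) : HCoh := (X.tens Y.dual).dual

/-- An embedding of hypercoherences: an injection preserving and reflecting the
coherence of finite nonempty subsets. -/
structure HEmb (X Y : HCoh) : Type where
  toFun : X.web → Y.web
  inj : Function.Injective toFun
  gam_iff : ∀ S : Set X.web, S.Finite → S.Nonempty → (X.Gam S ↔ Y.Gam (toFun '' S))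

/-- The category `HCohI` of hypercoherences and embeddings. -/
instance : Category HCoh where
  Hom := HEmb
  id X := ⟨id, fun _ _ h => h, by intro S _ _; rw [Set.image_id]⟩
  comp f g := ⟨g.toFun ∘ f.toFun, g.inj.comp f.inj, by
    intro S hfin hne
    rw [Set.image_comp]
    exact (f.gam_iff S hfin hne).trans (g.gam_iff _ (hfin.image _) (hne.image _))⟩
  id_comp _ := rfl
  comp_id _ := rfl
  assoc _ _ _ := rfl

/-- The induced embedding between duals. -/
def HEmb.dualMap {X Y : HCoh} (f : X ⟶ Y) : X.dual ⟶ Y.dual where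
  toFun := f.toFun
  inj := f.inj
  gam_iff S hfin hne := by
    constructor
    · rintro (⟨x, rfl⟩ | ⟨h1, h2, h3⟩)
      · exact Or.inl ⟨f.toFun x, Set.image_singleton⟩
      · exact Or.inr ⟨h1.image _, h2.image _, fun hg => h3 ((f.gam_iff S h1 h2).2 hg)⟩
    · rintro (⟨y, hy⟩ | ⟨_, _, h3⟩)
      · obtain ⟨x, hx⟩ := hne
        left
        refine ⟨x, Set.eq_singleton_iff_unique_mem.2 ⟨hx, fun x' hx' => f.inj ?_⟩⟩
        have m1 : f.toFun x' ∈ f.toFun '' S := Set.mem_image_of_mem _ hx'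
        have m2 : f.toFun x ∈ f.toFun '' S := Set.mem_image_of_mem _ hx
        erw [hy, Set.mem_singleton_iff] at m1 m2
        rw [m1, m2]
      · exact Or.inr ⟨hfin, hne, fun hg => h3 ((f.gam_iff S hfin hne).1 hg)⟩

/-- The induced embedding between tensor products. -/
def HEmb.tensMap {X X' Y Y' : HCoh} (f : X ⟶ X') (g : Y ⟶ Y') :
    X.tens Y ⟶ X'.tens Y' where
  toFun := Prod.map f.toFun g.toFun
  inj := f.inj.prodMap g.inj
  gam_iff S hfin hne := by
    have h1 : Prod.fst '' (Prod.map f.toFun g.toFun '' S) = f.toFun '' (Prod.fst '' S) := by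
      erw [Set.image_image, Set.image_image]
      rfl
    have h2 : Prod.snd '' (Prod.map f.toFun g.toFun '' S) = g.toFun '' (Prod.snd '' S) := by
      erw [Set.image_image, Set.image_image]
      rfl
    constructor
    · rintro ⟨_, _, hx, hy⟩
      exact ⟨hfin.image _, hne.image _,
        by erw [h1]; exact (f.gam_iff _ (hfin.image _) (hne.image _)).1 hx,
        by erw [h2]; exact (g.gam_iff _ (hfin.image _) (hne.image _)).1 hy⟩
    · rintro ⟨_, _, hx, hy⟩
      erw [h1] at hx
      erw [h2] at hy
      exact ⟨hfin, hne, (f.gam_iff _ (hfin.image _) (hne.image _)).2 hx,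
        (g.gam_iff _ (hfin.image _) (hne.image _)).2 hy⟩

/-- Linear negation as a covariant endofunctor of `HCohI`. -/
def hdualFunctor : HCoh ⥤ HCoh where
  obj := HCoh.dual
  map := HEmb.dualMap
  map_id _ := rfl
  map_comp _ _ := rfl

/-- Tensor as a functor on the product category. -/
def htensorFunctor : HCoh × HCoh ⥤ HCoh where
  obj p := p.1.tens p.2
  map f := HEmb.tensMap f.1 f.2
  map_id _ := rfl
  map_comp _ _ := rfl

/-- The category `HCohI^n`. -/
abbrev HCohTuple (n : ℕ) := Fin n → HCoh

/-- A normal functor: one preserving filtered colimits and finite pullbacks. -/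
def IsNormalFunctor {C : Type*} {D : Type*} [Category C] [Category D] (F : C ⥤ D) : Prop :=
  PreservesFilteredColimits F ∧ PreservesLimitsOfShape WalkingCospan F

/-- The pointwise dual of a functor. -/
def hdualF {n : ℕ} (F : HCohTuple n ⥤ HCoh) : HCohTuple n ⥤ HCoh := F ⋙ hdualFunctor

/-- The pointwise tensor of two functors. -/
def htensF {n : ℕ} (F G : HCohTuple n ⥤ HCoh) : HCohTuple n ⥤ HCoh :=
  F.prod' G ⋙ htensorFunctor

/-- The pointwise linear implication functor `F ⊸ G`. -/
def hlollyF {n : ℕ} (F G : HCohTuple n ⥤ HCoh) : HCohTuple n ⥤ HCoh :=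
  hdualF (htensF F (hdualF G))

/-- A uniform family of cliques of a normal functor `F : HCohI^n ⥤ HCohI`. -/
def IsUniformFamily {n : ℕ} (F : HCohTuple n ⥤ HCoh)
    (c : ∀ X : HCohTuple n, Set (F.obj X).web) : Prop :=
  (∀ X, (F.obj X).IsClique (c X)) ∧
    ∀ (X Y : HCohTuple n) (ι : X ⟶ Y), c X = (F.map ι).toFun ⁻¹' c Y

/-!
Cliques of linear implications compose as in coherence semantics: given a finite set of pairs
`(x, z)` of `g ∘ f`, choose middle points and apply the clique conditions of `f`, then of `g`.

For uniformity, the only nontrivial point is that a middle point `y' ∈ G(Y)` of a pair in the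
image of `ι : X ↪ Y` lies in the image of `G(ι)`. Now `X` is the pullback of the two embeddings
`y ↦ (y, y ∈ ι(X))` and `y ↦ (y, True)` of `Y` into `Y ⊗ Prop` (every finite subset of `Prop`
being coherent), and `G` preserves this pullback, so it suffices that `y'` has the same image
under both. Pushing the pairs forward along both embeddings, uniformity of `f` and `g` yields
pairs `(a, b₁), (a, b₂)` in one clique and `(b₁, c), (b₂, c)` in the next, and such a middle
point is unique.
-/

open scoped SetRel

namespace HEmb

variable {X Y Z : HCoh}

theorem ext {f g : HEmb X Y} (h : f.toFun = g.toFun) : f = g := by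
  cases f; cases g; cases h; rfl

theorem congr_toFun {f g : X ⟶ Y} (h : f = g) (x : X.web) : f.toFun x = g.toFun x :=
  h ▸ rfl

noncomputable def factorThrough (ι : X ⟶ Y) (e : Z ⟶ Y)
    (h : ∀ z, e.toFun z ∈ Set.range ι.toFun) : Z ⟶ X where
  toFun z := (h z).choose
  inj z z' hzz := e.inj <| by
    rw [← (h z).choose_spec, ← (h z').choose_spec]
    exact congrArg ι.toFun hzz
  gam_iff S hfin hne := by
    have himg : ι.toFun '' ((fun z => (h z).choose) '' S) = e.toFun '' S := by
      rw [Set.image_image]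
      exact Set.image_congr fun z _ => (h z).choose_spec
    rw [e.gam_iff S hfin hne, ← himg, ← ι.gam_iff _ (hfin.image _) (hne.image _)]

theorem factorThrough_comp (ι : X ⟶ Y) (e : Z ⟶ Y) (h : ∀ z, e.toFun z ∈ Set.range ι.toFun) :
    factorThrough ι e h ≫ ι = e :=
  ext (funext fun z => (h z).choose_spec)

end HEmb

def HCoh.complete (α : Type) : HCoh where
  web := α
  Gam S := S.Finite ∧ S.Nonempty
  finite h := h.1
  nonempty h := h.2
  sing x := ⟨Set.finite_singleton x, Set.singleton_nonempty x⟩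

namespace HEmb

def point {Z : HCoh} (z : Z.web) : HCoh.complete PUnit ⟶ Z where
  toFun _ := z
  inj _ _ _ := rfl
  gam_iff S hfin hne := by
    change S.Finite ∧ S.Nonempty ↔ Z.Gam ((fun _ => z) '' S)
    rw [hne.image_const]
    exact iff_of_true ⟨hfin, hne⟩ (Z.sing z)

def graph (Y : HCoh) {α : Type} (φ : Y.web → α) : Y ⟶ Y.tens (HCoh.complete α) where
  toFun y := (y, φ y)
  inj _ _ h := congrArg Prod.fst h
  gam_iff S hfin hne := by
    have hfst : Prod.fst '' ((fun y => (y, φ y)) '' S) = S :=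
      (Set.image_image ..).trans (Set.image_id' S)
    refine ⟨fun h => ⟨hfin.image _, hne.image _, ?_, (hfin.image _).image _, (hne.image _).image _⟩,
      fun h => ?_⟩
    · exact (congrArg Y.Gam hfst).mpr h
    · exact (congrArg Y.Gam hfst).mp h.2.2.1

end HEmb

namespace HCoh

theorem exists_fst_eq_of_isLimit {Y₁ Y₂ Z : HCoh} {j₁ : Y₁ ⟶ Z} {j₂ : Y₂ ⟶ Z}
    {c : PullbackCone j₁ j₂} (hc : IsLimit c) {y₁ : Y₁.web} {y₂ : Y₂.web}
    (h : j₁.toFun y₁ = j₂.toFun y₂) : ∃ x, c.fst.toFun x = y₁ := by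
  have hpt : HEmb.point y₁ ≫ j₁ = HEmb.point y₂ ≫ j₂ := HEmb.ext (funext fun _ => h)
  exact ⟨_, HEmb.congr_toFun (PullbackCone.IsLimit.lift_fst hc _ _ hpt) PUnit.unit⟩

section RangeIndicator

variable {I : Type*} {X Y : I → HCoh} (ι : X ⟶ Y)

def rangeIndicator : Y ⟶ fun i => (Y i).tens (complete Prop) :=
  fun i => HEmb.graph (Y i) (· ∈ Set.range (ι i).toFun)

variable (Y) in
def trueIndicator : Y ⟶ fun i => (Y i).tens (complete Prop) :=
  fun i => HEmb.graph (Y i) fun _ => True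

theorem comp_rangeIndicator : ι ≫ rangeIndicator ι = ι ≫ trueIndicator Y :=
  funext fun _ => HEmb.ext (funext fun x => Prod.ext rfl (eq_true ⟨x, rfl⟩))

noncomputable def isLimitRangeIndicator :
    IsLimit (PullbackCone.mk ι ι (comp_rangeIndicator ι)) := by
  have hcond (s : PullbackCone (rangeIndicator ι) (trueIndicator Y)) i w :
      (s.fst i).toFun w = (s.snd i).toFun w ∧ (s.fst i).toFun w ∈ Set.range (ι i).toFun :=
    have h := HEmb.congr_toFun (congrFun s.condition i) w
    ⟨congrArg Prod.fst h, of_eq_true (congrArg Prod.snd h)⟩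
  refine PullbackCone.IsLimit.mk _
    (fun s i => HEmb.factorThrough (ι i) (s.fst i) fun w => (hcond s i w).2)
    (fun s => funext fun i => HEmb.factorThrough_comp _ _ _) (fun s => ?_) (fun s m hm _ => ?_)
  · refine funext fun i => (HEmb.factorThrough_comp _ _ _).trans (HEmb.ext ?_)
    exact funext fun w => (hcond s i w).1
  · refine funext fun i => HEmb.ext (funext fun w => (ι i).inj ?_)
    exact (HEmb.congr_toFun (congrFun hm i) w).trans
      (HEmb.congr_toFun (HEmb.factorThrough_comp _ _ _) w).symm

theorem exists_map_eq_of_map_rangeIndicator {G : (I → HCoh) ⥤ HCoh}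
    [PreservesLimitsOfShape WalkingCospan G] {y : (G.obj Y).web}
    (h : (G.map (rangeIndicator ι)).toFun y = (G.map (trueIndicator Y)).toFun y) :
    ∃ x, (G.map ι).toFun x = y :=
  exists_fst_eq_of_isLimit
    (isLimitPullbackConeMapOfIsLimit G _ (isLimitRangeIndicator ι)) h

end RangeIndicator

variable {A B C : HCoh}

theorem lolly_gam_iff {S : Set (A.web × B.web)} (hfin : S.Finite) (hne : S.Nonempty) :
    (A.lolly B).Gam S ↔ (A.Gam (Prod.fst '' S) →
      B.Gam (Prod.snd '' S) ∧ ((Prod.snd '' S).Subsingleton → S.Subsingleton)) := by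
  rcases hne.exists_eq_singleton_or_nontrivial with ⟨p, rfl⟩ | hnt
  · refine iff_of_true (Or.inl ⟨p, rfl⟩) fun _ => ⟨?_, fun _ => Set.subsingleton_singleton⟩
    rw [Set.image_singleton]
    exact B.sing p.2
  · change (∃ p, S = {p}) ∨ (S.Finite ∧ S.Nonempty ∧ ¬ (S.Finite ∧ S.Nonempty ∧
      A.Gam (Prod.fst '' S) ∧ ((∃ b, Prod.snd '' S = {b}) ∨ ((Prod.snd '' S).Finite ∧
        (Prod.snd '' S).Nonempty ∧ ¬ B.Gam (Prod.snd '' S))))) ↔ _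
    simp only [Set.exists_eq_singleton_iff_nonempty_subsingleton, hfin, hne, hfin.image,
      hne.image, hnt.not_subsingleton, true_and, and_false, false_or, not_and, not_or,
      not_not]
    tauto

theorem IsClique.lolly_of_subset {c S : Set (A.web × B.web)} (hc : (A.lolly B).IsClique c)
    (hS : S ⊆ c) (hfin : S.Finite) (hne : S.Nonempty) (hA : A.Gam (Prod.fst '' S)) :
    B.Gam (Prod.snd '' S) ∧ ((Prod.snd '' S).Subsingleton → S.Subsingleton) :=
  (lolly_gam_iff hfin hne).1 (hc S hS hfin hne) hA

theorem IsClique.lolly_comp {f : SetRel A.web B.web} {g : SetRel B.web C.web}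
    (hf : (A.lolly B).IsClique f) (hg : (B.lolly C).IsClique g) :
    (A.lolly C).IsClique (f ○ g) := by
  intro S hS hfin hne
  refine (lolly_gam_iff (B := C) hfin hne).2 fun hA => ?_
  have : Nonempty B.web := let ⟨_, hp⟩ := hne; let ⟨y, _⟩ := hS hp; ⟨y⟩
  choose! ψ hψ using fun p (hp : p ∈ S) => hS hp
  set u := (fun p => (p.1, ψ p)) '' S
  set v := (fun p => (ψ p, p.2)) '' S
  have hu₁ : Prod.fst '' u = Prod.fst '' S := Set.image_image ..
  have hu₂ : Prod.snd '' u = ψ '' S := Set.image_image ..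
  have hv₁ : Prod.fst '' v = ψ '' S := Set.image_image ..
  have hv₂ : Prod.snd '' v = Prod.snd '' S := Set.image_image ..
  obtain ⟨hB, hu⟩ := hf.lolly_of_subset (Set.image_subset_iff.2 fun p hp => (hψ p hp).1)
    (hfin.image _) (hne.image _) (hu₁ ▸ hA)
  obtain ⟨hC, hv⟩ := hg.lolly_of_subset (Set.image_subset_iff.2 fun p hp => (hψ p hp).2)
    (hfin.image _) (hne.image _) (hv₁ ▸ hu₂ ▸ hB)
  refine ⟨hv₂ ▸ hC, fun hsnd => ?_⟩
  have hmid : (ψ '' S).Subsingleton := hv₁ ▸ (hv (hv₂ ▸ hsnd)).image _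
  have hfst : (Prod.fst '' S).Subsingleton := hu₁ ▸ (hu (hu₂ ▸ hmid)).image _
  exact (hfst.prod hsnd).anti Set.subset_prod

theorem IsClique.lolly_comp_mid_unique {f : SetRel A.web B.web} {g : SetRel B.web C.web}
    (hf : (A.lolly B).IsClique f) (hg : (B.lolly C).IsClique g) {a : A.web} {b₁ b₂ : B.web}
    {c : C.web} (hab₁ : (a, b₁) ∈ f) (hab₂ : (a, b₂) ∈ f) (hbc₁ : (b₁, c) ∈ g)
    (hbc₂ : (b₂, c) ∈ g) : b₁ = b₂ := by
  have hB : B.Gam {b₁, b₂} := by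
    have h := (hf.lolly_of_subset (Set.pair_subset hab₁ hab₂) (Set.toFinite _)
      (Set.insert_nonempty _ _) (by simpa [Set.image_pair] using A.sing a)).1
    rwa [Set.image_pair] at h
  have hsub := (hg.lolly_of_subset (Set.pair_subset hbc₁ hbc₂) (Set.toFinite _)
    (Set.insert_nonempty _ _) (by rwa [Set.image_pair])).2 (by simp [Set.image_pair])
  exact congrArg Prod.fst (hsub (Set.mem_insert _ _) (Set.mem_insert_of_mem _ rfl))

end HCoh

namespace IsUniformFamily

variable {n : ℕ}

theorem map_mem_iff {F : HCohTuple n ⥤ HCoh} {c : ∀ X : HCohTuple n, Set (F.obj X).web}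
    (hc : IsUniformFamily F c) {X Y : HCohTuple n} (ι : X ⟶ Y) (x : (F.obj X).web) :
    (F.map ι).toFun x ∈ c Y ↔ x ∈ c X := by
  rw [hc.2 X Y ι]
  rfl

theorem exists_map_eq_of_comp_mem {F G H : HCohTuple n ⥤ HCoh}
    [PreservesLimitsOfShape WalkingCospan G]
    {f : ∀ X : HCohTuple n, Set ((F.obj X).web × (G.obj X).web)}
    {g : ∀ X : HCohTuple n, Set ((G.obj X).web × (H.obj X).web)}
    (hf : IsUniformFamily (hlollyF F G) f) (hg : IsUniformFamily (hlollyF G H) g)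
    {X Y : HCohTuple n} (ι : X ⟶ Y) {x : (F.obj X).web} {y : (G.obj Y).web}
    {z : (H.obj X).web} (hxy : ((F.map ι).toFun x, y) ∈ f Y)
    (hyz : (y, (H.map ι).toFun z) ∈ g Y) : ∃ y₀, (G.map ι).toFun y₀ = y := by
  refine HCoh.exists_map_eq_of_map_rangeIndicator ι ?_
  have hcomm {K : HCohTuple n ⥤ HCoh} (w : (K.obj X).web) :
      (K.map (HCoh.trueIndicator Y)).toFun ((K.map ι).toFun w) =
        (K.map (HCoh.rangeIndicator ι)).toFun ((K.map ι).toFun w) :=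
    have h : K.map ι ≫ K.map (HCoh.trueIndicator Y) =
        K.map ι ≫ K.map (HCoh.rangeIndicator ι) := by
      rw [← K.map_comp, ← K.map_comp, HCoh.comp_rangeIndicator]
    HEmb.congr_toFun h w
  refine (hf.1 _).lolly_comp_mid_unique (hg.1 _) ((hf.map_mem_iff _ _).2 hxy) ?_
    ((hg.map_mem_iff _ _).2 hyz) ?_
  · exact hcomm x ▸ (hf.map_mem_iff (HCoh.trueIndicator Y) _).2 hxy
  · exact hcomm z ▸ (hg.map_mem_iff (HCoh.trueIndicator Y) _).2 hyz

end IsUniformFamily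

theorem uniform_families_compose_hypercoherences_general {n : ℕ}
    (F G H : HCohTuple n ⥤ HCoh)
    (hG : IsNormalFunctor G)
    (f : ∀ X : HCohTuple n, Set ((F.obj X).web × (G.obj X).web))
    (g : ∀ X : HCohTuple n, Set ((G.obj X).web × (H.obj X).web))
    (hf : IsUniformFamily (hlollyF F G) f) (hg : IsUniformFamily (hlollyF G H) g) :
    IsUniformFamily (hlollyF F H)
      (fun X => { p | ∃ y, (p.1, y) ∈ f X ∧ (y, p.2) ∈ g X }) := by
  have := hG.2
  refine ⟨fun X => (hf.1 X).lolly_comp (hg.1 X), fun X Y ι => ?_⟩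
  ext ⟨x, z⟩
  constructor
  · rintro ⟨y, hxy, hyz⟩
    exact ⟨(G.map ι).toFun y, (hf.map_mem_iff ι (x, y)).2 hxy, (hg.map_mem_iff ι (y, z)).2 hyz⟩
  · rintro ⟨y, hxy, hyz⟩
    obtain ⟨y, rfl⟩ := hf.exists_map_eq_of_comp_mem hg ι hxy hyz
    exact ⟨y, (hf.map_mem_iff ι (x, y)).1 hxy, (hg.map_mem_iff ι (y, z)).1 hyz⟩

/-- uniform families of cliques of hypercoherence normal functors are
closed under relational composition. -/
theorem uniform_families_compose_hypercoherences {n : ℕ}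
    (F G H : HCohTuple n ⥤ HCoh)
    (hF : IsNormalFunctor F) (hG : IsNormalFunctor G) (hH : IsNormalFunctor H)
    (f : ∀ X : HCohTuple n, Set ((F.obj X).web × (G.obj X).web))
    (g : ∀ X : HCohTuple n, Set ((G.obj X).web × (H.obj X).web))
    (hf : IsUniformFamily (hlollyF F G) f) (hg : IsUniformFamily (hlollyF G H) g) :
    IsUniformFamily (hlollyF F H)
      (fun X => { p | ∃ y, (p.1, y) ∈ f X ∧ (y, p.2) ∈ g X }) :=
  uniform_families_compose_hypercoherences_general F G H hG f g hf hg
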